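/- For nonnegative integers n, a, i, k with i ≤ k ≤ n-1-a, modulo Φ_n(q): Σ_{k=j}^{n-1-a} q^{k²+k-j(k-j)} qbinom(n-1-a-i, k-i) qbinom(a, k-j) ≡ q^{a²+a+j²+j+aj} qbinom(n-1-i, n-1-a-j) (mod Φ_n(q)), for all 1 ≤ j ≤ n-1-a and 0 ≤ i ≤ j, where the congruence holds in ℤ[q, q^{-1}] after multiplying by a q-power. -/

import Mathlib

/-!
Modulo `Φₙ(q)` we have `qⁿ ≡ 1`, and the exponents satisfy
`k² + k - j(k - j) = (a² + a + j² + j + aj) + (a + j - k)(n - 1 - a - k) + n(k - a - j)`,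
so the left-hand side is congruent to `q^(a²+a+j²+j+aj)` times
`Σₖ [n-1-a-i, k-i] [a, k-j] q^((a+j-k)(n-1-a-k))`. Writing `[n-1-a-i, k-i] = [n-1-a-i, n-1-a-k]`,
this sum is the q-Chu–Vandermonde expansion of `[n-1-i, n-1-a-j]`.

The congruence is read in the localization of `ℤ[q]` at the kernel of `q ↦ ζ` for a primitive
`n`-th root of unity `ζ`, which contains `Φₙ`. Every Gaussian binomial `[α, k]` with `k < n` lies in
this localization, since its denominator `∏ (1 - q^s)`, `s ≤ k`, does not vanish at `ζ`.
-/

open Polynomial Finset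

/-- The variable `q` as a rational function over `ℚ`. -/
noncomputable def qv : RatFunc ℚ := RatFunc.X

/-- The q-Pochhammer symbol `(x; t)_k = (1-x)(1-xt)⋯(1-xt^{k-1})`. -/
noncomputable def qPochAt (x t : RatFunc ℚ) (k : ℕ) : RatFunc ℚ :=
  ∏ i ∈ Finset.range k, (1 - x * t ^ i)

/-- The Gaussian binomial coefficient `[α choose k]_t = (t^{α-k+1}; t)_k / (t; t)_k`
with integer upper argument. -/
noncomputable def qbinomAt (t : RatFunc ℚ) (α : ℤ) (k : ℕ) : RatFunc ℚ :=
  (∏ i ∈ Finset.range k, (1 - t ^ (α - k + 1 + i))) /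
    (∏ i ∈ Finset.range k, (1 - t ^ (i + 1)))

/-- The Gaussian binomial coefficient in the variable `q`. -/
noncomputable def qbinom (α : ℤ) (k : ℕ) : RatFunc ℚ := qbinomAt qv α k

/-- The image of an integer polynomial in `RatFunc ℚ`. -/
noncomputable def toF (g : Polynomial ℤ) : RatFunc ℚ :=
  Polynomial.aeval (RatFunc.X : RatFunc ℚ) g

/-- `A ≡ B (mod Φ_n(q)^m)` in the localization of `ℤ[q]` at polynomials coprime
to `Φ_n`: there are `f g : ℤ[q]` with `Φ_n ∤ g` and `(A - B) * g = Φ_n^m * f`. -/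
def modCong (n m : ℕ) (A B : RatFunc ℚ) : Prop :=
  ∃ f g : Polynomial ℤ, ¬ (Polynomial.cyclotomic n ℤ ∣ g) ∧
    (A - B) * toF g = toF ((Polynomial.cyclotomic n ℤ) ^ m * f)

/-- The q-integer `[m]_q = (1-q^m)/(1-q)`. -/
noncomputable def qint (m : ℤ) : RatFunc ℚ := (1 - qv ^ m) / (1 - qv)

lemma qv_ne_zero : qv ≠ 0 := RatFunc.X_ne_zero

lemma toF_X : toF X = qv := by simp [toF, qv]

lemma toF_injective : Function.Injective toF := by
  have h : toF = (algebraMap ℚ[X] (RatFunc ℚ)).comp (mapRingHom (Int.castRingHom ℚ)) := by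
    ext p : 1
    induction p using Polynomial.induction_on <;> simp_all [toF]
  rw [h]
  exact (IsFractionRing.injective ℚ[X] (RatFunc ℚ)).comp (map_injective _ Int.cast_injective)

lemma qPochAt_succ (x t : RatFunc ℚ) (k : ℕ) :
    qPochAt x t (k + 1) = qPochAt x t k * (1 - x * t ^ k) :=
  prod_range_succ _ k

lemma qPochAt_succ' (x t : RatFunc ℚ) (k : ℕ) :
    qPochAt x t (k + 1) = (1 - x) * qPochAt (x * t) t k := by
  simp only [qPochAt, prod_range_succ', pow_succ, pow_zero, mul_one, mul_assoc, mul_comm]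

lemma qPochAt_add (x t : RatFunc ℚ) (k l : ℕ) :
    qPochAt x t (k + l) = qPochAt x t k * qPochAt (x * t ^ k) t l := by
  simp only [qPochAt, prod_range_add, pow_add, mul_assoc]

lemma qPochAt_qv_ne_zero (k : ℕ) : qPochAt qv qv k ≠ 0 := by
  refine prod_ne_zero_iff.mpr fun i _ h => ?_
  have : toF (X ^ (i + 1)) = toF 1 := by
    simp only [toF, map_pow, map_one, aeval_X]
    rw [pow_succ']; exact (sub_eq_zero.mp h).symm
  have := congrArg natDegree (toF_injective this)
  simp at this

lemma qbinom_eq_div (α : ℤ) (k : ℕ) :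
    qbinom α k = qPochAt (qv ^ (α - k + 1)) qv k / qPochAt qv qv k := by
  simp only [qbinom, qbinomAt, qPochAt, ← zpow_natCast, ← zpow_add₀ qv_ne_zero,
    ← zpow_one_add₀ qv_ne_zero, Nat.cast_add, Nat.cast_one, add_comm (1 : ℤ)]

lemma qbinom_zero_right (α : ℤ) : qbinom α 0 = 1 := by
  simp [qbinom, qbinomAt]

lemma qbinom_zero_left_succ (k : ℕ) : qbinom 0 (k + 1) = 0 := by
  have h : qv ^ ((0 : ℤ) - (k + 1 : ℕ) + 1) * qv ^ k = 1 := by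
    rw [← zpow_natCast, ← zpow_add₀ qv_ne_zero]
    simp
  rw [qbinom_eq_div, qPochAt_succ, h, sub_self, mul_zero, zero_div]

lemma qbinom_succ_succ (α : ℤ) (k : ℕ) :
    qbinom (α + 1) (k + 1) = qbinom α (k + 1) + qv ^ (α - k) * qbinom α k := by
  have hw : qv ^ (α - k) * qv = qv ^ (α - k + 1) := (zpow_add_one₀ qv_ne_zero _).symm
  rw [qbinom_eq_div, qbinom_eq_div, qbinom_eq_div, qPochAt_succ, qPochAt_succ, qPochAt_succ']
  push_cast
  rw [show α + 1 - (k + 1) + 1 = α - k + 1 by ring, show α - (k + 1) + 1 = α - k by ring, hw,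
    ← hw]
  have hD := qPochAt_qv_ne_zero (k + 1)
  rw [qPochAt_succ] at hD
  have hD₁ := left_ne_zero_of_mul hD
  have hD₂ := right_ne_zero_of_mul hD
  field_simp
  ring

lemma qbinom_symm (k l : ℕ) : qbinom ((k + l : ℕ) : ℤ) k = qbinom ((k + l : ℕ) : ℤ) l := by
  have hl : qv ^ (((k + l : ℕ) : ℤ) - k + 1) = qv * qv ^ l := by
    rw [← zpow_natCast, ← zpow_one_add₀ qv_ne_zero]; push_cast; ring_nf
  have hk : qv ^ (((k + l : ℕ) : ℤ) - l + 1) = qv * qv ^ k := by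
    rw [← zpow_natCast, ← zpow_one_add₀ qv_ne_zero]; push_cast; ring_nf
  rw [qbinom_eq_div, qbinom_eq_div, div_eq_div_iff (qPochAt_qv_ne_zero _) (qPochAt_qv_ne_zero _),
    hl, hk, mul_comm, ← qPochAt_add, mul_comm (qPochAt (qv * qv ^ k) qv l), ← qPochAt_add,
    add_comm]

/-- The q-Chu–Vandermonde identity. -/
theorem qbinom_add_eq (m p r : ℕ) :
    qbinom ((m : ℤ) + p) r =
      ∑ x ∈ antidiagonal r, qbinom m x.1 * qbinom p x.2 * qv ^ (((m : ℤ) - x.1) * x.2) := by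
  induction p generalizing r with
  | zero =>
    rw [sum_eq_single (r, 0)]
    · simp [qbinom_zero_right]
    · rintro ⟨l, _ | t⟩ hx hne
      · simp_all
      · simp [qbinom_zero_left_succ]
    · simp
  | succ p ih =>
    cases r with
    | zero => simp [qbinom_zero_right]
    | succ r =>
      have hterm : ∀ x ∈ antidiagonal r,
          qv ^ ((m : ℤ) + p - r) * (qbinom m x.1 * qbinom p x.2 * qv ^ (((m : ℤ) - x.1) * x.2)) =
            qbinom m x.1 * (qv ^ ((p : ℤ) - x.2) * qbinom p x.2) *
              qv ^ (((m : ℤ) - x.1) * (x.2 + 1 : ℕ)) := by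
        intro x hx
        have hr : (r : ℤ) = x.1 + x.2 := by rw [← mem_antidiagonal.mp hx]; push_cast; ring
        have he : qv ^ ((m : ℤ) + p - r) * qv ^ (((m : ℤ) - x.1) * x.2) =
            qv ^ ((p : ℤ) - x.2) * qv ^ (((m : ℤ) - x.1) * (x.2 + 1 : ℕ)) := by
          rw [← zpow_add₀ qv_ne_zero, ← zpow_add₀ qv_ne_zero, hr]; push_cast; ring_nf
        linear_combination qbinom m x.1 * qbinom p x.2 * he
      push_cast
      rw [← add_assoc, qbinom_succ_succ, ih, ih, Nat.sum_antidiagonal_succ',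
        Nat.sum_antidiagonal_succ', mul_sum, sum_congr rfl hterm]
      simp only [qbinom_succ_succ, qbinom_zero_right, mul_add, add_mul, sum_add_distrib]
      push_cast
      ring

lemma qbinom_add_sub_eq_sum_Icc (a : ℕ) {N i j : ℕ} (hij : i ≤ j) (hjN : j ≤ N) :
    qbinom ((a + (N - i) : ℕ) : ℤ) (N - j) =
      ∑ k ∈ Icc j N, qbinom ((N - i : ℕ) : ℤ) (k - i) * qbinom a (k - j) *
        qv ^ (((a : ℤ) + j - k) * ((N : ℤ) - k)) := by
  rw [Nat.cast_add, qbinom_add_eq]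
  refine sum_nbij' (fun x => x.1 + j) (fun k => (k - j, N - k)) ?_ ?_ ?_ ?_ ?_ <;>
    simp only [HasAntidiagonal.mem_antidiagonal, mem_Icc, Prod.forall, Prod.mk.injEq]
  any_goals omega
  intro l t h
  have hsymm : qbinom ((N - i : ℕ) : ℤ) t = qbinom ((N - i : ℕ) : ℤ) (l + j - i) := by
    rw [show N - i = t + (l + j - i) by omega, qbinom_symm]
  have he : ((a : ℤ) - l) * t = ((a : ℤ) + j - (l + j : ℕ)) * ((N : ℤ) - (l + j : ℕ)) := by
    push_cast; congr 1 <;> omega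
  rw [hsymm, Nat.add_sub_cancel, he]
  ring

lemma zpow_mem_of_inv_mem {K : Type*} [DivisionRing K] {L : Subring K} {y : K} (hy : y ∈ L)
    (hy' : y⁻¹ ∈ L) (e : ℤ) : y ^ e ∈ L := by
  cases e with
  | ofNat m => simpa using pow_mem hy m
  | negSucc m => rw [zpow_negSucc, ← inv_pow]; exact pow_mem hy' _

lemma exists_zpow_sub_one_eq_mul {K : Type*} [Field K] {L : Subring K} {y : K} (hy0 : y ≠ 0)
    (hy : y ∈ L) (hy' : y⁻¹ ∈ L) (m : ℤ) : ∃ G ∈ L, y ^ m - 1 = (y - 1) * G := by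
  have hgeom : ∀ M, ∑ i ∈ range M, y ^ i ∈ L := fun M => sum_mem fun i _ => pow_mem hy i
  cases m with
  | ofNat M => exact ⟨_, hgeom M, by simp [mul_geom_sum]⟩
  | negSucc M =>
    refine ⟨-y⁻¹ ^ (M + 1) * ∑ i ∈ range (M + 1), y ^ i,
      mul_mem (neg_mem (pow_mem hy' _)) (hgeom _), ?_⟩
    have hinv : y⁻¹ ^ (M + 1) * y ^ (M + 1) = 1 := by
      rw [← mul_pow, inv_mul_cancel₀ hy0, one_pow]
    rw [mul_left_comm, mul_geom_sum, zpow_negSucc, ← inv_pow]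
    linear_combination hinv

section Local

variable (P : Ideal ℤ[X]) [hP : P.IsPrime]

def ratFuncLocalization : Subring (RatFunc ℚ) where
  carrier := {A | ∃ p s : ℤ[X], s ∉ P ∧ A * toF s = toF p}
  mul_mem' := by
    rintro A B ⟨p, s, hs, hA⟩ ⟨p', s', hs', hB⟩
    refine ⟨p * p', s * s', hP.mul_notMem hs hs', ?_⟩
    simp only [toF, map_mul] at *
    rw [← hA, ← hB]; ring
  one_mem' := ⟨1, 1, hP.one_notMem, by simp⟩
  add_mem' := by
    rintro A B ⟨p, s, hs, hA⟩ ⟨p', s', hs', hB⟩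
    refine ⟨p * s' + p' * s, s * s', hP.mul_notMem hs hs', ?_⟩
    simp only [toF, map_mul, map_add] at *
    rw [← hA, ← hB]; ring
  zero_mem' := ⟨0, 1, hP.one_notMem, by simp [toF]⟩
  neg_mem' := by
    rintro A ⟨p, s, hs, hA⟩
    exact ⟨-p, s, hs, by simp only [toF, map_neg] at *; rw [← hA]; ring⟩

variable {P}

lemma toF_mem_ratFuncLocalization (p : ℤ[X]) : toF p ∈ ratFuncLocalization P :=
  ⟨p, 1, hP.one_notMem, by simp [toF]⟩

lemma inv_toF_mem_ratFuncLocalization {s : ℤ[X]} (hs : s ∉ P) :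
    (toF s)⁻¹ ∈ ratFuncLocalization P := by
  have hs0 : toF s ≠ 0 := fun h =>
    hs (toF_injective (h.trans (map_zero (aeval _)).symm) ▸ P.zero_mem)
  exact ⟨1, s, hs, by rw [inv_mul_cancel₀ hs0]; simp [toF]⟩

lemma modCong_one_of_sub_eq_mul {n : ℕ} (hΦ : cyclotomic n ℤ ∈ P) {A B R : RatFunc ℚ}
    (hR : R ∈ ratFuncLocalization P) (h : A - B = toF (cyclotomic n ℤ) * R) :
    modCong n 1 A B := by
  obtain ⟨p, s, hs, hRs⟩ := hR
  refine ⟨p, s, fun hdvd => hs (Ideal.mem_of_dvd _ hdvd hΦ), ?_⟩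
  rw [h, mul_assoc, hRs, pow_one]
  simp [toF]

lemma qv_zpow_mem_ratFuncLocalization (hX : X ∉ P) (e : ℤ) : qv ^ e ∈ ratFuncLocalization P :=
  zpow_mem_of_inv_mem (toF_X ▸ toF_mem_ratFuncLocalization X)
    (toF_X ▸ inv_toF_mem_ratFuncLocalization hX) e

lemma qbinom_mem_ratFuncLocalization (hX : X ∉ P) {k : ℕ} (hk : ∀ i < k, 1 - X ^ (i + 1) ∉ P)
    (α : ℤ) :
    qbinom α k ∈ ratFuncLocalization P := by
  have hqv : qv ∈ ratFuncLocalization P := toF_X ▸ toF_mem_ratFuncLocalization X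
  rw [qbinom_eq_div, div_eq_mul_inv, qPochAt, qPochAt, ← prod_inv_distrib]
  refine mul_mem (prod_mem fun i _ => sub_mem (one_mem _)
    (mul_mem (qv_zpow_mem_ratFuncLocalization hX _) (pow_mem hqv i))) (prod_mem fun i hi => ?_)
  have : 1 - qv * qv ^ i = toF (1 - X ^ (i + 1)) := by simp [toF, qv, pow_succ']
  rw [this]
  exact inv_toF_mem_ratFuncLocalization (hk i (mem_range.mp hi))

lemma exists_qv_zpow_sub_one_eq_cyclotomic_mul (hX : X ∉ P) (n : ℕ) (m : ℤ) :
    ∃ G ∈ ratFuncLocalization P, qv ^ ((n : ℤ) * m) - 1 = toF (cyclotomic n ℤ) * G := by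
  obtain ⟨c, hc⟩ := cyclotomic.dvd_X_pow_sub_one n ℤ
  have hy : qv ^ n - 1 = toF (cyclotomic n ℤ) * toF c := by
    simp only [toF, ← map_mul, ← hc]; simp [qv]
  obtain ⟨G, hG, hyG⟩ := exists_zpow_sub_one_eq_mul (pow_ne_zero n qv_ne_zero)
    (qv_zpow_mem_ratFuncLocalization hX n)
    (by simpa [← zpow_natCast, ← zpow_neg] using qv_zpow_mem_ratFuncLocalization hX (-n)) m
  refine ⟨toF c * G, mul_mem (toF_mem_ratFuncLocalization c) hG, ?_⟩
  rw [zpow_mul, zpow_natCast, hyG, hy, mul_assoc]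

end Local

section PrimitiveRoot

variable {K : Type*} [CommRing K] {ζ : K} {n : ℕ}

lemma IsPrimitiveRoot.cyclotomic_mem_ker_aeval [IsDomain K] (hζ : IsPrimitiveRoot ζ n)
    (hn : 0 < n) : cyclotomic n ℤ ∈ RingHom.ker (aeval (R := ℤ) ζ) := by
  rw [RingHom.mem_ker, aeval_def, eval₂_eq_eval_map, map_cyclotomic]
  exact hζ.isRoot_cyclotomic hn

lemma IsPrimitiveRoot.X_notMem_ker_aeval [Nontrivial K] (hζ : IsPrimitiveRoot ζ n)
    (hn : n ≠ 0) : (X : ℤ[X]) ∉ RingHom.ker (aeval (R := ℤ) ζ) := by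
  simpa [RingHom.mem_ker] using hζ.ne_zero hn

lemma IsPrimitiveRoot.one_sub_X_pow_notMem_ker_aeval (hζ : IsPrimitiveRoot ζ n) {s : ℕ}
    (hs0 : s ≠ 0) (hs : s < n) : (1 - X ^ s : ℤ[X]) ∉ RingHom.ker (aeval (R := ℤ) ζ) := by
  rw [RingHom.mem_ker, map_sub, map_one, map_pow, aeval_X, sub_eq_zero]
  exact (hζ.pow_ne_one_of_pos_of_lt hs0 hs).symm

end PrimitiveRoot

lemma sum_sub_eq_sum_mul_qv_zpow_sub_one {n a i j : ℕ} (hn : 1 ≤ n) (ha : a ≤ n - 1)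
    (hj : j ≤ n - 1 - a) (hi : i ≤ j) :
    (∑ k ∈ Icc j (n - 1 - a),
        qv ^ ((k : ℤ) ^ 2 + k - (j : ℤ) * ((k : ℤ) - j)) *
          qbinom ((n : ℤ) - 1 - a - i) (k - i) * qbinom a (k - j)) -
      qv ^ ((a : ℤ) ^ 2 + a + (j : ℤ) ^ 2 + j + (a : ℤ) * j) *
        qbinom ((n : ℤ) - 1 - i) (n - 1 - a - j) =
    ∑ k ∈ Icc j (n - 1 - a),
      qv ^ ((a : ℤ) ^ 2 + a + (j : ℤ) ^ 2 + j + (a : ℤ) * j) *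
        qbinom ((n : ℤ) - 1 - a - i) (k - i) * qbinom a (k - j) *
        qv ^ (((a : ℤ) + j - k) * ((n : ℤ) - 1 - a - k)) *
        (qv ^ ((n : ℤ) * ((k : ℤ) - a - j)) - 1) := by
  have hN : ((n - 1 - a : ℕ) : ℤ) = n - 1 - a := by omega
  rw [show (n : ℤ) - 1 - a - i = ((n - 1 - a - i : ℕ) : ℤ) by omega,
    show (n : ℤ) - 1 - i = ((a + (n - 1 - a - i) : ℕ) : ℤ) by omega,
    qbinom_add_sub_eq_sum_Icc a hi hj, mul_sum, ← sum_sub_distrib]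
  refine sum_congr rfl fun k _ => ?_
  have hexp : qv ^ ((k : ℤ) ^ 2 + k - (j : ℤ) * ((k : ℤ) - j)) =
      qv ^ ((a : ℤ) ^ 2 + a + (j : ℤ) ^ 2 + j + (a : ℤ) * j) *
        qv ^ (((a : ℤ) + j - k) * ((n : ℤ) - 1 - a - k)) * qv ^ ((n : ℤ) * ((k : ℤ) - a - j)) := by
    rw [← zpow_add₀ qv_ne_zero, ← zpow_add₀ qv_ne_zero]
    ring_nf
  rw [hexp, hN]
  ring

theorem stmt17_general (n a i j : ℕ) (hn : 1 ≤ n) (ha : a ≤ n - 1)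
    (hj2 : j ≤ n - 1 - a) (hi : i ≤ j) :
    modCong n 1
      (∑ k ∈ Finset.Icc j (n - 1 - a),
        qv ^ ((k : ℤ) ^ 2 + k - (j : ℤ) * ((k : ℤ) - j)) *
          qbinom ((n : ℤ) - 1 - a - i) (k - i) * qbinom a (k - j))
      (qv ^ ((a : ℤ) ^ 2 + a + (j : ℤ) ^ 2 + j + (a : ℤ) * j) *
        qbinom ((n : ℤ) - 1 - i) (n - 1 - a - j)) := by
  have hζ := Complex.isPrimitiveRoot_exp n (by omega)
  set P := RingHom.ker (aeval (R := ℤ) (Complex.exp (2 * Real.pi * Complex.I / n)))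
  have : P.IsPrime := RingHom.ker_isPrime _
  have hX : X ∉ P := hζ.X_notMem_ker_aeval (by omega)
  have hbinom (α : ℤ) {k : ℕ} (hk : k < n) : qbinom α k ∈ ratFuncLocalization P :=
    qbinom_mem_ratFuncLocalization (k := k) hX
      (fun l hl => hζ.one_sub_X_pow_notMem_ker_aeval l.succ_ne_zero (by omega)) α
  choose G hGmem hG using fun k : ℕ =>
    exists_qv_zpow_sub_one_eq_cyclotomic_mul hX n ((k : ℤ) - a - j)
  refine modCong_one_of_sub_eq_mul (hζ.cyclotomic_mem_ker_aeval (by omega))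
    (R := ∑ k ∈ Icc j (n - 1 - a),
      qv ^ ((a : ℤ) ^ 2 + a + (j : ℤ) ^ 2 + j + (a : ℤ) * j) *
        qbinom ((n : ℤ) - 1 - a - i) (k - i) * qbinom a (k - j) *
        qv ^ (((a : ℤ) + j - k) * ((n : ℤ) - 1 - a - k)) * G k)
    (sum_mem fun k hk => ?_) ?_
  · simp only [mem_Icc] at hk
    refine mul_mem (mul_mem (mul_mem (mul_mem ?_ (hbinom _ (by omega))) (hbinom _ (by omega)))
      ?_) (hGmem k) <;> exact qv_zpow_mem_ratFuncLocalization hX _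
  rw [sum_sub_eq_sum_mul_qv_zpow_sub_one hn ha hj2 hi, mul_sum]
  exact sum_congr rfl fun k _ => by rw [hG k]; ring

/-- For `a ≤ n-1`, `1 ≤ j ≤ n-1-a`, `0 ≤ i ≤ j`:
`Σ_{k=j}^{n-1-a} q^{k²+k-j(k-j)} [n-1-a-i, k-i][a, k-j]
  ≡ q^{a²+a+j²+j+aj} [n-1-i, n-1-a-j] (mod Φ_n(q))`. -/
theorem stmt17 (n a i j : ℕ) (hn : 1 ≤ n) (ha : a ≤ n - 1)
    (hj1 : 1 ≤ j) (hj2 : j ≤ n - 1 - a) (hi : i ≤ j) :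
    modCong n 1
      (∑ k ∈ Finset.Icc j (n - 1 - a),
        qv ^ ((k : ℤ) ^ 2 + k - (j : ℤ) * ((k : ℤ) - j)) *
          qbinom ((n : ℤ) - 1 - a - i) (k - i) * qbinom a (k - j))
      (qv ^ ((a : ℤ) ^ 2 + a + (j : ℤ) ^ 2 + j + (a : ℤ) * j) *
        qbinom ((n : ℤ) - 1 - i) (n - 1 - a - j)) :=
  stmt17_general n a i j hn ha hj2 hi
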